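/- arXiv:2507.00934 — 7 statements merged into one kernel-verified Lean document; each statement's English description precedes it below -/
import Mathlib

section
/- Let L be the splitting field over ℂ(t) of the polynomial X³ + t·X² + 1. Then L/ℂ(t) is a Galois extension and its Galois group Gal(L/ℂ(t)) is isomorphic to the symmetric group 𝔖₃ on three letters. -/
open Polynomial

/-- The cubic `X³ + t·X² + 1` over `ℂ(t)`. -/
noncomputable def cubicS3 : Polynomial (RatFunc ℂ) :=
  Polynomial.X ^ 3 + Polynomial.C RatFunc.X * Polynomial.X ^ 2 + 1

/-!
The Galois group acts faithfully on the three roots, so it embeds in `𝔖₃`; since the cubic is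
irreducible its order is divisible by `3`, hence it is `3` or `6`. If it were `3`, the square
root `(u - v)(u - w)(v - w)` of the discriminant `-(4t³ + 27)` would have degree at most `2`
inside an extension of odd degree, so it would lie in `ℂ(t)`. But by the integral root theorem
over the UFD `ℂ[t]`, a polynomial of odd degree is not a square in `ℂ(t)`; the same theorem
shows that the cubic has no root in `ℂ(t)`, hence is irreducible.
-/

open Module

theorem mem_range_of_sq_eq_algebraMap_of_odd_finrank {F L : Type*} [Field F] [Field L]
    [Algebra F L] [FiniteDimensional F L] (hodd : Odd (finrank F L)) {x : L} {a : F}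
    (hx : x ^ 2 = algebraMap F L a) : x ∈ (algebraMap F L).range := by
  have hint : IsIntegral F x := .of_finite F x
  have hle : (minpoly F x).natDegree ≤ 2 := by
    have := minpoly.min F x (monic_X_pow_sub_C a two_ne_zero) (by simp [hx])
    rw [degree_X_pow_sub_C two_pos] at this
    exact natDegree_le_of_degree_le this
  have hdvd := minpoly.degree_dvd hint
  have hpos := minpoly.natDegree_pos hint
  rw [← minpoly.natDegree_eq_one_iff]
  interval_cases (minpoly F x).natDegree
  · rfl
  · exact absurd (hodd.of_dvd_nat hdvd) (by decide)

instance {F : Type*} [Field F] (p : F[X]) :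
    Fact ((p.map (algebraMap F p.SplittingField)).Splits) :=
  ⟨SplittingField.splits p⟩

namespace Cubic

variable {F : Type*} [Field F] (P : Cubic F)

theorem isSquare_discr_of_odd_finrank_splittingField (ha : P.a ≠ 0)
    (hodd : Odd (finrank F P.toPoly.SplittingField)) : IsSquare P.discr := by
  obtain ⟨x, y, z, hroots⟩ :=
    (splits_iff_roots_eq_three (φ := algebraMap F P.toPoly.SplittingField) ha).mp
      (SplittingField.splits _)
  have hδ := discr_eq_prod_three_roots ha hroots
  obtain ⟨b, hb⟩ := mem_range_of_sq_eq_algebraMap_of_odd_finrank hodd hδ.symm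
  refine ⟨b, (algebraMap F P.toPoly.SplittingField).injective ?_⟩
  rw [hδ, map_mul, hb, sq]

theorem card_rootSet_splittingField [CharZero F] (ha : P.a ≠ 0) (hirr : Irreducible P.toPoly) :
    Nat.card (P.toPoly.rootSet P.toPoly.SplittingField) = 3 := by
  rw [Nat.card_eq_fintype_card, card_rootSet_eq_natDegree hirr.separable
    (SplittingField.splits _), natDegree_of_a_ne_zero ha]

theorem card_gal_of_not_isSquare_discr [CharZero F] (ha : P.a ≠ 0)
    (hirr : Irreducible P.toPoly) (hdiscr : ¬IsSquare P.discr) : Nat.card P.toPoly.Gal = 6 := by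
  have hdeg : P.toPoly.natDegree = 3 := natDegree_of_a_ne_zero ha
  have hle : Nat.card P.toPoly.Gal ≤ 6 := by
    have :=
      Nat.card_le_card_of_injective _ (Gal.galActionHom_injective P.toPoly P.toPoly.SplittingField)
    rwa [Nat.card_perm, P.card_rootSet_splittingField ha hirr] at this
  have hdvd : 3 ∣ Nat.card P.toPoly.Gal :=
    hdeg ▸ Gal.prime_degree_dvd_card hirr (hdeg ▸ Nat.prime_three)
  have hne : Nat.card P.toPoly.Gal ≠ 3 := fun h ↦ hdiscr <|
    P.isSquare_discr_of_odd_finrank_splittingField ha <| by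
      rw [← Gal.card_of_separable hirr.separable, h]; decide
  have := Nat.card_pos (α := P.toPoly.Gal)
  omega

theorem nonempty_gal_mulEquiv_perm_fin_three [CharZero F] (ha : P.a ≠ 0)
    (hirr : Irreducible P.toPoly) (hdiscr : ¬IsSquare P.discr) :
    Nonempty (P.toPoly.Gal ≃* Equiv.Perm (Fin 3)) := by
  have hroots := P.card_rootSet_splittingField ha hirr
  have hbij : Function.Bijective (Gal.galActionHom P.toPoly P.toPoly.SplittingField) :=
    (Gal.galActionHom_injective _ _).bijective_of_nat_card_le <| by
      rw [Nat.card_perm, hroots, P.card_gal_of_not_isSquare_discr ha hirr hdiscr]; rfl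
  exact ⟨(MulEquiv.ofBijective _ hbij).trans (Finite.equivFinOfCardEq hroots).permCongrHom⟩

end Cubic

theorem RatFunc.not_isSquare_algebraMap_of_odd_natDegree {k : Type*} [Field k] {p : k[X]}
    (hp : Odd p.natDegree) : ¬IsSquare (algebraMap k[X] (RatFunc k) p) := by
  rintro ⟨s, hs⟩
  obtain ⟨q, rfl⟩ : IsLocalization.IsInteger k[X] s :=
    isInteger_of_is_root_of_monic (monic_X_pow_sub_C p two_ne_zero) (by simp [sq, hs])
  rw [← map_mul] at hs
  have hq : q ≠ 0 := by rintro rfl; simp_all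
  rw [IsFractionRing.injective k[X] (RatFunc k) hs, natDegree_mul hq hq] at hp
  exact Nat.not_odd_iff_even.mpr ⟨_, rfl⟩ hp

theorem Polynomial.pow_three_add_X_mul_sq_add_one_ne_zero {k : Type*} [Field k] (P : k[X]) :
    P ^ 3 + X * P ^ 2 + 1 ≠ 0 := by
  intro h
  have hunit : IsUnit P := .of_mul_eq_one (-(P ^ 2 + X * P)) (by linear_combination -h)
  obtain ⟨c, hc, rfl⟩ := Polynomial.isUnit_iff.mp hunit
  have h1 := congrArg (coeff · 1) h
  simp only [← C_pow, coeff_add, coeff_X_mul, coeff_C, coeff_one] at h1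
  simp_all

theorem irreducible_X_pow_three_add_C_X_mul_X_sq_add_one (k : Type*) [Field k] :
    Irreducible (X ^ 3 + C RatFunc.X * X ^ 2 + 1 : (RatFunc k)[X]) := by
  have hmonic : (X ^ 3 + C RatFunc.X * X ^ 2 + 1 : (RatFunc k)[X]).Monic := by monicity!
  have hdeg : (X ^ 3 + C RatFunc.X * X ^ 2 + 1 : (RatFunc k)[X]).natDegree = 3 := by
    compute_degree!
  rw [hmonic.irreducible_iff_roots_eq_zero_of_degree_le_three (by omega) hdeg.le,
    Multiset.eq_zero_iff_forall_notMem]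
  intro r hr
  have hr' : aeval r (X ^ 3 + C X * X ^ 2 + 1 : k[X][X]) = 0 := by
    rw [mem_roots hmonic.ne_zero, IsRoot.def] at hr
    simp only [eval_add, eval_mul, eval_pow, eval_X, eval_C, eval_one] at hr
    simpa [RatFunc.algebraMap_X] using hr
  obtain ⟨P, rfl⟩ : IsLocalization.IsInteger k[X] r :=
    isInteger_of_is_root_of_monic (by monicity!) hr'
  apply pow_three_add_X_mul_sq_add_one_ne_zero P
  apply IsFractionRing.injective k[X] (RatFunc k)
  simpa using hr'

theorem cubicS3_eq_toPoly : cubicS3 = Cubic.toPoly ⟨1, RatFunc.X, 0, 1⟩ := by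
  simp [cubicS3, Cubic.toPoly]

theorem not_isSquare_discr_cubicS3 :
    ¬IsSquare (Cubic.discr ⟨1, (RatFunc.X : RatFunc ℂ), 0, 1⟩) := by
  have hdiscr : Cubic.discr ⟨1, (RatFunc.X : RatFunc ℂ), 0, 1⟩ =
      algebraMap ℂ[X] (RatFunc ℂ) (-(4 * X ^ 3 + 27)) := by
    simp only [Cubic.discr, map_neg, map_add, map_mul, map_pow, map_ofNat, RatFunc.algebraMap_X]
    ring
  have hdeg : (-(4 * X ^ 3 + 27) : ℂ[X]).natDegree = 3 := by compute_degree!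
  rw [hdiscr]
  exact RatFunc.not_isSquare_algebraMap_of_odd_natDegree (by rw [hdeg]; decide)

/-- The splitting field `L` of `X³ + t·X² + 1` over `ℂ(t)` is a Galois extension with
Galois group isomorphic to the symmetric group `𝔖₃` on three letters. -/
theorem galois_group_of_cubic_is_S3 :
    IsGalois (RatFunc ℂ) cubicS3.SplittingField ∧
    Nonempty ((cubicS3.SplittingField ≃ₐ[RatFunc ℂ] cubicS3.SplittingField) ≃*
      Equiv.Perm (Fin 3)) := by
  have hirr : Irreducible cubicS3 := irreducible_X_pow_three_add_C_X_mul_X_sq_add_one ℂ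
  refine ⟨IsGalois.of_separable_splitting_field hirr.separable, ?_⟩
  rw [cubicS3_eq_toPoly] at hirr ⊢
  exact Cubic.nonempty_gal_mulEquiv_perm_fin_three _ one_ne_zero hirr not_isSquare_discr_cubicS3
end

section
/- For a ∈ ℂ, let g_a = x₀³ + x₁³ + x₂³ + x₃³ + a·(x₀ + x₁)·x₂·x₃, a homogeneous cubic polynomial in four variables over ℂ. Then there exists a nonzero point p ∈ ℂ⁴ at which all four partial derivatives of g_a vanish if and only if 4a³ + 27 = 0. Equivalently, the projective cubic surface {g_a = 0} ⊂ ℙ³ is singular if and only if 4a³ + 27 = 0. -/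
open MvPolynomial

/-- The (𝔖₃×C₂)-symmetric cubic form
`g_a = x₀³ + x₁³ + x₂³ + x₃³ + a(x₀ + x₁)x₂x₃`. -/
noncomputable def gS3C2 (a : ℂ) : MvPolynomial (Fin 4) ℂ :=
  X 0 ^ 3 + X 1 ^ 3 + X 2 ^ 3 + X 3 ^ 3 + C a * (X 0 + X 1) * X 2 * X 3

lemma gS3C2_pderiv0 (a : ℂ) (p : Fin 4 → ℂ) :
    eval p (pderiv 0 (gS3C2 a)) = 3 * p 0 ^ 2 + a * p 2 * p 3 := by
  simp [gS3C2, pderiv_X, Pi.single_apply]; ring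

lemma gS3C2_pderiv1 (a : ℂ) (p : Fin 4 → ℂ) :
    eval p (pderiv 1 (gS3C2 a)) = 3 * p 1 ^ 2 + a * p 2 * p 3 := by
  simp [gS3C2, pderiv_X, Pi.single_apply]; ring

lemma gS3C2_pderiv2 (a : ℂ) (p : Fin 4 → ℂ) :
    eval p (pderiv 2 (gS3C2 a)) = 3 * p 2 ^ 2 + a * (p 0 + p 1) * p 3 := by
  simp [gS3C2, pderiv_X, Pi.single_apply]; try ring

lemma gS3C2_pderiv3 (a : ℂ) (p : Fin 4 → ℂ) :
    eval p (pderiv 3 (gS3C2 a)) = 3 * p 3 ^ 2 + a * (p 0 + p 1) * p 2 := by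
  simp [gS3C2, pderiv_X, Pi.single_apply]; try ring

/-- The cubic surface `{g_a = 0} ⊂ ℙ³` is singular (i.e. the four partial derivatives of
`g_a` have a common nonzero zero) if and only if `4a³ + 27 = 0`. -/
theorem gS3C2_singular_iff (a : ℂ) :
    (∃ p : Fin 4 → ℂ, p ≠ 0 ∧
      ∀ i : Fin 4, MvPolynomial.eval p (MvPolynomial.pderiv i (gS3C2 a)) = 0) ↔
    4 * a ^ 3 + 27 = 0 := by
  constructor
  · rintro ⟨p, hp, h⟩
    set x := p 0 with hx'
    set y := p 1 with hy'
    set z := p 2 with hz'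
    set w := p 3 with hw'
    have e1 : 3 * x ^ 2 + a * z * w = 0 := by rw [← gS3C2_pderiv0 a p]; exact h 0
    have e2 : 3 * y ^ 2 + a * z * w = 0 := by rw [← gS3C2_pderiv1 a p]; exact h 1
    have e3 : 3 * z ^ 2 + a * (x + y) * w = 0 := by rw [← gS3C2_pderiv2 a p]; exact h 2
    have e4 : 3 * w ^ 2 + a * (x + y) * z = 0 := by rw [← gS3C2_pderiv3 a p]; exact h 3
    have hzero : ∀ u : ℂ, 3 * u ^ 2 = 0 → u = 0 := by
      intro u hu
      have : u ^ 2 = 0 := by linear_combination hu / 3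
      exact pow_eq_zero_iff (by norm_num) |>.mp this
    by_cases ha : a = 0
    · exfalso; apply hp
      subst ha
      have hx0 : x = 0 := hzero x (by linear_combination e1)
      have hy0 : y = 0 := hzero y (by linear_combination e2)
      have hz0 : z = 0 := hzero z (by linear_combination e3)
      have hw0 : w = 0 := hzero w (by linear_combination e4)
      funext i; fin_cases i <;> assumption
    -- a ≠ 0
    have hz0 : z ≠ 0 := by
      intro hz
      apply hp
      have hx0 : x = 0 := hzero x (by linear_combination e1 - a * w * hz)
      have hy0 : y = 0 := hzero y (by linear_combination e2 - a * w * hz)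
      have hw0 : w = 0 := hzero w (by linear_combination e4 - a * (x + y) * hz)
      funext i; fin_cases i <;> simpa
    have hw0 : w ≠ 0 := by
      intro hw
      apply hp
      have hx0 : x = 0 := hzero x (by linear_combination e1 - a * z * hw)
      have hy0 : y = 0 := hzero y (by linear_combination e2 - a * z * hw)
      have hz0' : z = 0 := hzero z (by linear_combination e3 - a * (x + y) * hw)
      funext i; fin_cases i <;> simpa
    have hx0 : x ≠ 0 := by
      intro hx
      have : a * z * w = 0 := by linear_combination e1 - 3 * x * hx
      rcases mul_eq_zero.mp this with h' | h'
      · rcases mul_eq_zero.mp h' with h'' | h''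
        · exact ha h''
        · exact hz0 h''
      · exact hw0 h'
    -- x² = y², so y = x or y = -x
    have hxy : (x - y) * (x + y) = 0 := by linear_combination (e1 - e2) / 3
    rcases mul_eq_zero.mp hxy with hxy' | hxy'
    · -- y = x
      have hyx : y = x := by linear_combination -hxy'
      have e3' : 3 * z ^ 2 + 2 * a * x * w = 0 := by
        linear_combination e3 - a * w * hyx
      have e4' : 3 * w ^ 2 + 2 * a * x * z = 0 := by
        linear_combination e4 - a * z * hyx
      have hfac : (z - w) * (3 * (z + w) - 2 * a * x) = 0 := by
        linear_combination e3' - e4'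
      rcases mul_eq_zero.mp hfac with hzw | hs
      · -- z = w
        have hzw' : z = w := by linear_combination hzw
        have hzf : z * (3 * z + 2 * a * x) = 0 := by
          linear_combination e4' + (3 * w + 3 * z) * hzw'
        have h3z : 3 * z + 2 * a * x = 0 := by
          rcases mul_eq_zero.mp hzf with h' | h'
          · exact absurd h' hz0
          · exact h'
        have key : x ^ 2 * (4 * a ^ 3 + 27) = 0 := by
          linear_combination 9 * e1 + 9 * a * z * hzw' + a * (2 * a * x - 3 * z) * h3z
        rcases mul_eq_zero.mp key with h' | h'
        · exact absurd (pow_eq_zero_iff (by norm_num) |>.mp h') hx0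
        · exact h'
      · -- 3(z+w) = 2ax
        have key : x ^ 2 * (4 * a ^ 3 + 27) = 0 := by
          linear_combination 9 * e1 + (3 * a / 2) * e3' + (3 * a / 2) * e4' +
            (a * (3 * z + 3 * w - 2 * a * x) - (9 * a / 2) * (z + w)) * hs
        rcases mul_eq_zero.mp key with h' | h'
        · exact absurd (pow_eq_zero_iff (by norm_num) |>.mp h') hx0
        · exact h'
    · -- x + y = 0
      exfalso
      exact hz0 (hzero z (by linear_combination e3 - a * w * hxy'))
  · intro ha
    refine ⟨![1, 1, -2 * a / 3, -2 * a / 3], ?_, ?_⟩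
    · intro h
      have := congrFun h 0
      simp at this
    · intro i
      fin_cases i <;>
        simp [gS3C2, pderiv_X, Pi.single_apply] <;>
        first | linear_combination -ha / 9 | linear_combination ha / 9 | ring
end

section
/- Let G = GO₄⁺(3) be the group of 4×4 matrices M over 𝔽₃ = ℤ/3ℤ with Mᵀ·M = 1. The quotient homomorphism π : G → G ⧸ Z(G) onto PGO₄⁺(3) admits no group-homomorphism section: there is no group homomorphism s : G ⧸ Z(G) → G with π ∘ s = id. In other words, the central extension 0 → C₂ → GO₄⁺(3) → PGO₄⁺(3) → 0 is non-split. -/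
attribute [local instance] starRingOfComm

/-- The permutation matrix of the 4-cycle on `Fin 4`, an element of `GO₄⁺(3)`. -/
private def Pm : Matrix (Fin 4) (Fin 4) (ZMod 3) := !![0,1,0,0; 0,0,1,0; 0,0,0,1; 1,0,0,0]

/-- The diagonal matrix `diag (1,1,1,-1)`, an element of `GO₄⁺(3)`. -/
private def Dm : Matrix (Fin 4) (Fin 4) (ZMod 3) := !![1,0,0,0; 0,1,0,0; 0,0,1,0; 0,0,0,2]

/-- An element of `GO₄⁺(3)` of order `8` (its fourth power is `-1`). -/
private def gm : Matrix (Fin 4) (Fin 4) (ZMod 3) := !![1,1,2,2; 2,2,2,2; 1,2,1,2; 2,1,1,2]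

/-- Any orthogonal matrix commuting with `Pm` and `Dm` is `±1`, hence has fourth power `1`. -/
private lemma key (c : Matrix (Fin 4) (Fin 4) (ZMod 3))
    (hP : c * Pm = Pm * c) (hD : c * Dm = Dm * c) (ho : star c * c = 1) :
    c ^ 4 = 1 := by
  have p1 := congrFun (congrFun hP 0) 1
  have p2 := congrFun (congrFun hP 1) 2
  have p3 := congrFun (congrFun hP 2) 3
  have p4 := congrFun (congrFun hP 0) 2
  have p5 := congrFun (congrFun hP 1) 3
  have p6 := congrFun (congrFun hP 0) 3
  have p7 := congrFun (congrFun hP 1) 1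
  have p8 := congrFun (congrFun hP 2) 2
  have p9 := congrFun (congrFun hP 2) 1
  have d0 := congrFun (congrFun hD 0) 3
  have d1 := congrFun (congrFun hD 1) 3
  have d2 := congrFun (congrFun hD 2) 3
  have d3 := congrFun (congrFun hD 3) 0
  have d4 := congrFun (congrFun hD 3) 1
  have d5 := congrFun (congrFun hD 3) 2
  simp [Pm, Dm, Matrix.mul_apply, Fin.sum_univ_four, Matrix.vecHead, Matrix.vecTail]
    at p1 p2 p3 p4 p5 p6 p7 p8 p9 d0 d1 d2 d3 d4 d5
  have z03 : c 0 3 = 0 := by linear_combination d0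
  have z13 : c 1 3 = 0 := by linear_combination d1
  have z23 : c 2 3 = 0 := by linear_combination d2
  have z30 : c 3 0 = 0 := by linear_combination -d3
  have z31 : c 3 1 = 0 := by linear_combination -d4
  have z32 : c 3 2 = 0 := by linear_combination -d5
  have z01 : c 0 1 = 0 := by rw [p4, p5]; exact z23
  have z02 : c 0 2 = 0 := by rw [p6]; exact z13
  have z10 : c 1 0 = 0 := by rw [p7, p8]; exact z32
  have z12 : c 1 2 = 0 := by rw [p5]; exact z23
  have z20 : c 2 0 = 0 := by rw [p9]; exact z31
  have z21 : c 2 1 = 0 := by rw [p8]; exact z32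
  have q1 : c 1 1 = c 0 0 := p1.symm
  have q2 : c 2 2 = c 0 0 := by rw [← p2]; exact p1.symm
  have q3 : c 3 3 = c 0 0 := by rw [← p3, ← p2]; exact p1.symm
  clear d0 d1 d2 d3 d4 d5 p1 p2 p3 p4 p5 p6 p7 p8 p9 hP hD
  have hc : c = c 0 0 • (1 : Matrix (Fin 4) (Fin 4) (ZMod 3)) := by
    ext i j
    fin_cases i <;> fin_cases j <;>
      simp [Matrix.smul_apply, Matrix.one_apply, z03, z13, z23, z30, z31, z32,
        z01, z02, z10, z12, z20, z21, q1, q2, q3]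
  rw [hc] at ho ⊢
  revert ho
  generalize c 0 0 = a
  revert a
  decide

/-- If the quotient by the center splits and `g ^ 4 = n` is central, then there is a
central element whose fourth power is `n`. -/
private lemma split_aux {G : Type*} [Group G]
    (s : (G ⧸ Subgroup.center G) →* G)
    (hs : (QuotientGroup.mk' (Subgroup.center G)).comp s = MonoidHom.id _)
    (g n : G) (hn : n ∈ Subgroup.center G) (hg4 : g ^ 4 = n) :
    ∃ c : G, c ∈ Subgroup.center G ∧ c ^ 4 = n := by
  set π := QuotientGroup.mk' (Subgroup.center G) with hπ
  have hsec : ∀ x, π (s x) = x := fun x => DFunLike.congr_fun hs x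
  set h := s (π g) with hh
  have h4 : h ^ 4 = 1 := by
    rw [hh, ← map_pow, ← map_pow, hg4,
      show π n = 1 from (QuotientGroup.eq_one_iff n).mpr hn, map_one]
  have hcZ : g * h⁻¹ ∈ Subgroup.center G := by
    apply (QuotientGroup.eq_one_iff _).mp
    show π (g * h⁻¹) = 1
    rw [map_mul, map_inv, hh, hsec (π g), mul_inv_cancel]
  refine ⟨g * h⁻¹, hcZ, ?_⟩
  have hch : Commute (g * h⁻¹) h := ((Subgroup.mem_center_iff.mp hcZ) h).symm
  have he : (g * h⁻¹ * h) ^ 4 = (g * h⁻¹) ^ 4 * h ^ 4 := hch.mul_pow 4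
  rw [inv_mul_cancel_right, h4, mul_one, hg4] at he
  exact he.symm

/-- The quotient map `GO₄⁺(3) → PGO₄⁺(3)` (quotient by the center) admits no
group-homomorphism section; i.e. the central extension
`0 → C₂ → GO₄⁺(3) → PGO₄⁺(3) → 0` is non-split. -/
theorem PGO4_plus_3_quotient_has_no_section :
    ¬ ∃ s : ((Matrix.orthogonalGroup (Fin 4) (ZMod 3)) ⧸
        Subgroup.center (Matrix.orthogonalGroup (Fin 4) (ZMod 3))) →*
        Matrix.orthogonalGroup (Fin 4) (ZMod 3),
      (QuotientGroup.mk' (Subgroup.center (Matrix.orthogonalGroup (Fin 4) (ZMod 3)))).comp s =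
        MonoidHom.id _ := by
  rintro ⟨s, hs⟩
  have hgm : gm ∈ Matrix.orthogonalGroup (Fin 4) (ZMod 3) := by
    rw [Matrix.mem_orthogonalGroup_iff]; decide
  have hPm : Pm ∈ Matrix.orthogonalGroup (Fin 4) (ZMod 3) := by
    rw [Matrix.mem_orthogonalGroup_iff]; decide
  have hDm : Dm ∈ Matrix.orthogonalGroup (Fin 4) (ZMod 3) := by
    rw [Matrix.mem_orthogonalGroup_iff]; decide
  have hnm : (-1 : Matrix (Fin 4) (Fin 4) (ZMod 3)) ∈ Matrix.orthogonalGroup (Fin 4) (ZMod 3) := by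
    rw [Matrix.mem_orthogonalGroup_iff]; decide
  have hnZ : (⟨-1, hnm⟩ : Matrix.orthogonalGroup (Fin 4) (ZMod 3)) ∈
      Subgroup.center (Matrix.orthogonalGroup (Fin 4) (ZMod 3)) := by
    rw [Subgroup.mem_center_iff]
    intro b
    apply Subtype.ext
    show (b : Matrix (Fin 4) (Fin 4) (ZMod 3)) * (-1) = (-1) * b
    rw [mul_neg_one, neg_one_mul]
  have hg4 : (⟨gm, hgm⟩ : Matrix.orthogonalGroup (Fin 4) (ZMod 3)) ^ 4 = ⟨-1, hnm⟩ := by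
    apply Subtype.ext
    rw [SubmonoidClass.coe_pow]
    show gm ^ 4 = -1
    decide
  obtain ⟨c, hcZ, hc4⟩ := split_aux s hs _ _ hnZ hg4
  have hcomm : ∀ b : Matrix.orthogonalGroup (Fin 4) (ZMod 3), b * c = c * b :=
    Subgroup.mem_center_iff.mp hcZ
  have hcP : (c : Matrix (Fin 4) (Fin 4) (ZMod 3)) * Pm = Pm * c :=
    congrArg Subtype.val (hcomm ⟨Pm, hPm⟩).symm
  have hcD : (c : Matrix (Fin 4) (Fin 4) (ZMod 3)) * Dm = Dm * c :=
    congrArg Subtype.val (hcomm ⟨Dm, hDm⟩).symm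
  have ho : star (c : Matrix (Fin 4) (Fin 4) (ZMod 3)) * c = 1 := (Unitary.mem_iff.mp c.2).1
  have h1 : (c : Matrix (Fin 4) (Fin 4) (ZMod 3)) ^ 4 = 1 := key c hcP hcD ho
  have h2 : (c : Matrix (Fin 4) (Fin 4) (ZMod 3)) ^ 4 = -1 := by
    rw [← SubmonoidClass.coe_pow]
    exact congrArg Subtype.val hc4
  rw [h1] at h2
  exact absurd h2 (by decide)
end

section
/- For k ∈ ℂ, let g_k = x³ + y³ + z³ − 3k·xyz, a homogeneous cubic polynomial in three variables over ℂ. Then there exists a nonzero point p ∈ ℂ³ at which all three partial derivatives of g_k vanish if and only if k³ = 1. Equivalently, the plane cubic curve {g_k = 0} ⊂ ℙ² is smooth if and only if k³ ≠ 1. -/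
open MvPolynomial

/-- The Hesse cubic form `g_k = x³ + y³ + z³ − 3k·xyz`. -/
noncomputable def hesseCubic (k : ℂ) : MvPolynomial (Fin 3) ℂ :=
  X 0 ^ 3 + X 1 ^ 3 + X 2 ^ 3 - C (3 * k) * (X 0 * X 1 * X 2)

lemma hesseCubic_ev0 (k : ℂ) (p : Fin 3 → ℂ) :
    MvPolynomial.eval p (MvPolynomial.pderiv 0 (hesseCubic k)) =
      3 * p 0 ^ 2 - 3 * k * (p 1 * p 2) := by
  simp [hesseCubic, pderiv_X, Pi.single_apply]
  try ring_nf
  try tauto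

lemma hesseCubic_ev1 (k : ℂ) (p : Fin 3 → ℂ) :
    MvPolynomial.eval p (MvPolynomial.pderiv 1 (hesseCubic k)) =
      3 * p 1 ^ 2 - 3 * k * (p 0 * p 2) := by
  simp [hesseCubic, pderiv_X, Pi.single_apply]
  try ring_nf
  try tauto

lemma hesseCubic_ev2 (k : ℂ) (p : Fin 3 → ℂ) :
    MvPolynomial.eval p (MvPolynomial.pderiv 2 (hesseCubic k)) =
      3 * p 2 ^ 2 - 3 * k * (p 0 * p 1) := by
  simp [hesseCubic, pderiv_X, Pi.single_apply]
  try ring_nf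
  try tauto

/-- The plane cubic `{g_k = 0} ⊂ ℙ²` is singular (i.e. the three partial derivatives of
`g_k` have a common nonzero zero) if and only if `k³ = 1`. -/
theorem hesseCubic_singular_iff (k : ℂ) :
    (∃ p : Fin 3 → ℂ, p ≠ 0 ∧
      ∀ i : Fin 3, MvPolynomial.eval p (MvPolynomial.pderiv i (hesseCubic k)) = 0) ↔
    k ^ 3 = 1 := by
  constructor
  · rintro ⟨p, hp, h⟩
    have h0 := h 0; have h1 := h 1; have h2 := h 2
    rw [hesseCubic_ev0] at h0
    rw [hesseCubic_ev1] at h1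
    rw [hesseCubic_ev2] at h2
    set x := p 0 with hxdef; set y := p 1 with hydef; set z := p 2 with hzdef
    have hx : x ^ 2 = k * (y * z) := by linear_combination h0 / 3
    have hy : y ^ 2 = k * (x * z) := by linear_combination h1 / 3
    have hz : z ^ 2 = k * (x * y) := by linear_combination h2 / 3
    have sq0 : ∀ w : ℂ, w ^ 2 = 0 → w = 0 := fun w hw =>
      pow_eq_zero_iff (two_ne_zero) |>.mp hw
    have hxne : x ≠ 0 := by
      intro hx0
      apply hp
      have hy0 : y = 0 := sq0 y (by rw [hy, hx0]; ring)
      have hz0 : z = 0 := sq0 z (by rw [hz, hx0]; ring)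
      funext i; fin_cases i
      · exact hx0
      · exact hy0
      · exact hz0
    have hyne : y ≠ 0 := by
      intro hy0
      apply hp
      have hx0 : x = 0 := sq0 x (by rw [hx, hy0]; ring)
      have hz0 : z = 0 := sq0 z (by rw [hz, hy0]; ring)
      funext i; fin_cases i
      · exact hx0
      · exact hy0
      · exact hz0
    have hzne : z ≠ 0 := by
      intro hz0
      apply hp
      have hx0 : x = 0 := sq0 x (by rw [hx, hz0]; ring)
      have hy0 : y = 0 := sq0 y (by rw [hy, hz0]; ring)
      funext i; fin_cases i
      · exact hx0
      · exact hy0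
      · exact hz0
    have key : (k ^ 3 - 1) * (x * y * z) ^ 2 = 0 := by
      linear_combination (-(y ^ 2 * z ^ 2)) * hx - (k * y * z * z ^ 2) * hy -
        (k ^ 2 * x * y * z ^ 2) * hz
    rcases mul_eq_zero.mp key with hcase | hcase
    · linear_combination hcase
    · exfalso
      have := sq0 _ hcase
      exact (mul_ne_zero (mul_ne_zero hxne hyne) hzne) this
  · intro hk
    have hk0 : k ≠ 0 := by rintro rfl; simp at hk
    refine ⟨![1, 1, k ^ 2], ?_, ?_⟩
    · intro h
      have := congrFun h 0
      simp at this
    · intro i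
      fin_cases i
      · erw [hesseCubic_ev0]; simp; linear_combination -3 * hk
      · erw [hesseCubic_ev1]; simp; linear_combination -3 * hk
      · erw [hesseCubic_ev2]; simp; linear_combination 3 * k * hk
end

section
/- Let k ∈ ℂ with k³ ≠ 1, and let g_k = x³ + y³ + z³ − 3k·xyz. A nonzero point p = (x, y, z) ∈ ℂ³ satisfies g_k(p) = 0 and det(Hess g_k)(p) = 0, where Hess g_k is the 3×3 matrix of second partial derivatives of g_k, if and only if p is a nonzero scalar multiple of one of the nine points (0, 1, −γ), (−γ, 0, 1), (1, −γ, 0) with γ ∈ ℂ satisfying γ³ = 1. In other words, the nine flexes of the smooth plane cubic in Hesse form x³ + y³ + z³ − 3kxyz = 0 are exactly the points [0:1:−γ], [−γ:0:1], [1:−γ:0] with γ³ = 1. -/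
open MvPolynomial

/-- The Hessian matrix of second partial derivatives of a cubic form, evaluated at `p`. -/
noncomputable def hessianAt (g : MvPolynomial (Fin 3) ℂ) (p : Fin 3 → ℂ) :
    Matrix (Fin 3) (Fin 3) ℂ :=
  Matrix.of fun i j => MvPolynomial.eval p (MvPolynomial.pderiv i (MvPolynomial.pderiv j g))

lemma hesseCubic_eval (k : ℂ) (q : Fin 3 → ℂ) :
    eval q (hesseCubic k) = q 0 ^ 3 + q 1 ^ 3 + q 2 ^ 3 - 3 * k * (q 0 * q 1 * q 2) := by
  simp [hesseCubic]

lemma hesseCubic_hessian_det (k : ℂ) (q : Fin 3 → ℂ) :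
    (hessianAt (hesseCubic k) q).det =
    216 * (q 0 * q 1 * q 2) - 54 * k ^ 2 * (q 0 ^ 3 + q 1 ^ 3 + q 2 ^ 3)
      - 54 * k ^ 3 * (q 0 * q 1 * q 2) := by
  have h3 : ∀ i : Fin 3, pderiv i (3 : MvPolynomial (Fin 3) ℂ) = 0 := by
    intro i
    rw [show (3 : MvPolynomial (Fin 3) ℂ) = C 3 by rw [map_ofNat], pderiv_C]
  simp [hessianAt, hesseCubic, Matrix.det_fin_three, pderiv_X, h3]; ring

/-- The nine flexes of the smooth Hesse cubic `x³ + y³ + z³ − 3kxyz = 0` (with `k³ ≠ 1`)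
are exactly the points `[0:1:−γ]`, `[−γ:0:1]`, `[1:−γ:0]` with `γ³ = 1`: a nonzero
`p ∈ ℂ³` lies on the curve with vanishing Hessian determinant iff it is a nonzero scalar
multiple of one of these nine points. -/
theorem hesseCubic_flexes (k : ℂ) (hk : k ^ 3 ≠ 1) (p : Fin 3 → ℂ) (hp : p ≠ 0) :
    (MvPolynomial.eval p (hesseCubic k) = 0 ∧ (hessianAt (hesseCubic k) p).det = 0) ↔
    ∃ c : ℂ, c ≠ 0 ∧ ∃ γ : ℂ, γ ^ 3 = 1 ∧
      (p = c • ![0, 1, -γ] ∨ p = c • ![-γ, 0, 1] ∨ p = c • ![1, -γ, 0]) := by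
  constructor
  · rintro ⟨h1, h2⟩
    rw [hesseCubic_eval] at h1
    rw [hesseCubic_hessian_det] at h2
    set x := p 0 with hxdef
    set y := p 1 with hydef
    set z := p 2 with hzdef
    have hsum : x ^ 3 + y ^ 3 + z ^ 3 = 3 * k * (x * y * z) := by linear_combination h1
    have hxyz : x * y * z = 0 := by
      have h216 : 216 * (1 - k ^ 3) * (x * y * z) = 0 := by
        linear_combination h2 + 54 * k ^ 2 * hsum
      have hne : (216 : ℂ) * (1 - k ^ 3) ≠ 0 := by
        have h1k : (1 : ℂ) - k ^ 3 ≠ 0 := sub_ne_zero.mpr (Ne.symm hk)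
        exact mul_ne_zero (by norm_num) h1k
      exact (mul_eq_zero.mp h216).resolve_left hne
    have hS : x ^ 3 + y ^ 3 + z ^ 3 = 0 := by rw [hxyz] at hsum; simpa using hsum
    rcases mul_eq_zero.mp hxyz with h | hz0
    · rcases mul_eq_zero.mp h with hx0 | hy0
      · -- x = 0, point is c • ![0, 1, -γ]
        have hy : y ≠ 0 := by
          intro hy0
          apply hp
          have hz0 : z = 0 := by
            have : z ^ 3 = 0 := by rw [hx0, hy0] at hS; linear_combination hS
            exact pow_eq_zero_iff (by norm_num) |>.mp this
          funext i
          fin_cases i <;> simp [← hxdef, ← hydef, ← hzdef, hx0, hy0, hz0]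
        refine ⟨y, hy, -(z / y), ?_, Or.inl ?_⟩
        · have hz3 : z ^ 3 = -y ^ 3 := by rw [hx0] at hS; linear_combination hS
          field_simp
          linear_combination -hz3
        · funext i
          fin_cases i <;>
            simp [← hxdef, ← hydef, ← hzdef, hx0] <;> field_simp
      · -- y = 0, point is c • ![-γ, 0, 1]
        have hz : z ≠ 0 := by
          intro hz0
          apply hp
          have hx0 : x = 0 := by
            have : x ^ 3 = 0 := by rw [hy0, hz0] at hS; linear_combination hS
            exact pow_eq_zero_iff (by norm_num) |>.mp this
          funext i
          fin_cases i <;> simp [← hxdef, ← hydef, ← hzdef, hx0, hy0, hz0]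
        refine ⟨z, hz, -(x / z), ?_, Or.inr (Or.inl ?_)⟩
        · have hx3 : x ^ 3 = -z ^ 3 := by rw [hy0] at hS; linear_combination hS
          field_simp
          linear_combination -hx3
        · funext i
          fin_cases i <;>
            simp [← hxdef, ← hydef, ← hzdef, hy0] <;> field_simp
    · -- z = 0, point is c • ![1, -γ, 0]
      have hx : x ≠ 0 := by
        intro hx0
        apply hp
        have hy0 : y = 0 := by
          have : y ^ 3 = 0 := by rw [hx0, hz0] at hS; linear_combination hS
          exact pow_eq_zero_iff (by norm_num) |>.mp this
        funext i
        fin_cases i <;> simp [← hxdef, ← hydef, ← hzdef, hx0, hy0, hz0]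
      refine ⟨x, hx, -(y / x), ?_, Or.inr (Or.inr ?_)⟩
      · have hy3 : y ^ 3 = -x ^ 3 := by rw [hz0] at hS; linear_combination hS
        field_simp
        linear_combination -hy3
      · funext i
        fin_cases i <;>
          simp [← hxdef, ← hydef, ← hzdef, hz0] <;> field_simp
  · rintro ⟨c, hc, γ, hγ, h | h | h⟩ <;> subst h <;>
      constructor <;>
      simp only [hesseCubic_eval, hesseCubic_hessian_det, Pi.smul_apply, Matrix.cons_val_zero,
        Matrix.cons_val_one, Matrix.head_cons, Matrix.cons_val_two, Matrix.tail_cons,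
        smul_eq_mul] <;>
      first
        | linear_combination (-(c ^ 3)) * hγ
        | linear_combination (54 * k ^ 2 * c ^ 3) * hγ
end

section
/- Let σ₁, σ₂, σ₃ ∈ GL₄(ℂ) be the matrices σ₁ = [[1,0,0,0],[0,1,0,0],[0,0,1,0],[0,1,1,−1]], σ₂ = [[1,0,0,0],[0,−1,0,1],[0,0,1,0],[0,0,0,−1]], σ₃ = [[1,0,0,0],[0,0,−1,0],[0,−1,0,0],[0,−1,−1,1]]. Then for M ∈ GL₄(ℂ), the following are equivalent: (i) for each i ∈ {1,2,3} there exists a nonzero c ∈ ℂ with M·σᵢ = c·(σᵢ·M); (ii) there exist nonzero λ, μ ∈ ℂ with M = diag(λ, μ, μ, μ). In other words, the centralizer in PGL₄(ℂ) of the subgroup generated by the classes of σ₁, σ₂, σ₃ consists exactly of the classes of the diagonal matrices diag(λ, μ, μ, μ), a subgroup isomorphic to ℂˣ. -/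
/-- The matrix by which the transposition (12) of 𝔖₄ acts on ℙ³. -/
def sigma1 : Matrix (Fin 4) (Fin 4) ℂ :=
  !![1, 0, 0, 0; 0, 1, 0, 0; 0, 0, 1, 0; 0, 1, 1, -1]

/-- The matrix by which the transposition (13) of 𝔖₄ acts on ℙ³. -/
def sigma2 : Matrix (Fin 4) (Fin 4) ℂ :=
  !![1, 0, 0, 0; 0, -1, 0, 1; 0, 0, 1, 0; 0, 0, 0, -1]

/-- The matrix by which the transposition (34) of 𝔖₄ acts on ℙ³. -/
def sigma3 : Matrix (Fin 4) (Fin 4) ℂ :=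
  !![1, 0, 0, 0; 0, 0, -1, 0; 0, -1, 0, 0; 0, -1, -1, 1]

lemma trace_sigma1 : Matrix.trace sigma1 = 2 := by
  simp [sigma1, Matrix.trace, Fin.sum_univ_four, Matrix.vecHead, Matrix.vecTail]
  norm_num

lemma trace_sigma3 : Matrix.trace sigma3 = 2 := by
  simp [sigma3, Matrix.trace, Fin.sum_univ_four, Matrix.vecHead, Matrix.vecTail]
  norm_num

lemma trace_sigma2_sq : Matrix.trace (sigma2 * sigma2) = 4 := by
  simp [sigma2, Matrix.trace, Matrix.mul_apply, Fin.sum_univ_four,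
    Matrix.vecHead, Matrix.vecTail]
  norm_num

/-- An invertible matrix `M` commutes with each of `σ₁, σ₂, σ₃` up to a nonzero scalar
(i.e. its class centralizes the subgroup of `PGL₄(ℂ)` generated by their classes) if and
only if `M = diag(λ, μ, μ, μ)` for some nonzero `λ, μ`. -/
theorem centralizer_of_S4_action (M : GL (Fin 4) ℂ) :
    ((∃ c : ℂ, c ≠ 0 ∧ (M : Matrix (Fin 4) (Fin 4) ℂ) * sigma1 =
        c • (sigma1 * (M : Matrix (Fin 4) (Fin 4) ℂ))) ∧
     (∃ c : ℂ, c ≠ 0 ∧ (M : Matrix (Fin 4) (Fin 4) ℂ) * sigma2 =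
        c • (sigma2 * (M : Matrix (Fin 4) (Fin 4) ℂ))) ∧
     (∃ c : ℂ, c ≠ 0 ∧ (M : Matrix (Fin 4) (Fin 4) ℂ) * sigma3 =
        c • (sigma3 * (M : Matrix (Fin 4) (Fin 4) ℂ)))) ↔
    ∃ lam mu : ℂ, lam ≠ 0 ∧ mu ≠ 0 ∧
      (M : Matrix (Fin 4) (Fin 4) ℂ) = Matrix.diagonal ![lam, mu, mu, mu] := by
  constructor
  · rintro ⟨⟨c1, -, h1⟩, ⟨c2, -, h2⟩, ⟨c3, -, h3⟩⟩
    set A := (M : Matrix (Fin 4) (Fin 4) ℂ) with hA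
    set B := ((M⁻¹ : GL (Fin 4) ℂ) : Matrix (Fin 4) (Fin 4) ℂ) with hB
    have hABone : A * B = 1 := M.mul_inv
    have hBAone : B * A = 1 := M.inv_mul
    have hdet : A.det ≠ 0 := by
      have hu : IsUnit A := ⟨M, hA.symm⟩
      exact ((Matrix.isUnit_iff_isUnit_det A).mp hu).ne_zero
    have key : ∀ (s : Matrix (Fin 4) (Fin 4) ℂ) (c : ℂ),
        A * s = c • (s * A) → c * Matrix.trace s = Matrix.trace s := by
      intro s c h
      have h2 : c • s = A * s * B := by
        calc c • s = c • (s * (A * B)) := by rw [hABone, mul_one]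
        _ = (c • (s * A)) * B := by rw [Matrix.smul_mul, mul_assoc]
        _ = A * s * B := by rw [← h]
      have h3 : Matrix.trace (c • s) = Matrix.trace s := by
        rw [h2, Matrix.trace_mul_comm, ← mul_assoc, hBAone, one_mul]
      simpa using h3
    -- the scalar for σ₂ squared
    have h2' : A * (sigma2 * sigma2) = (c2 * c2) • ((sigma2 * sigma2) * A) := by
      calc A * (sigma2 * sigma2) = (A * sigma2) * sigma2 := by rw [mul_assoc]
      _ = (c2 • (sigma2 * A)) * sigma2 := by rw [h2]
      _ = c2 • (sigma2 * (A * sigma2)) := by rw [Matrix.smul_mul, mul_assoc]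
      _ = c2 • (sigma2 * (c2 • (sigma2 * A))) := by rw [h2]
      _ = (c2 * c2) • ((sigma2 * sigma2) * A) := by
          rw [Matrix.mul_smul, smul_smul, mul_assoc]
    have hc1 : c1 = 1 := by
      have := key sigma1 c1 h1
      rw [trace_sigma1] at this
      linear_combination this / 2
    have hc3 : c3 = 1 := by
      have := key sigma3 c3 h3
      rw [trace_sigma3] at this
      linear_combination this / 2
    have hc2 : c2 = 1 ∨ c2 = -1 := by
      have := key (sigma2 * sigma2) (c2 * c2) h2'
      rw [trace_sigma2_sq] at this
      exact mul_self_eq_one_iff.mp (by linear_combination this / 4)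
    subst hc1; subst hc3
    have E1 := Matrix.ext_iff.mpr h1
    have E2 := Matrix.ext_iff.mpr h2
    have E1_01 := E1 0 1; have E1_11 := E1 1 1; have E1_21 := E1 2 1
    have E1_30 := E1 3 0; have E1_31 := E1 3 1; have E1_32 := E1 3 2
    simp only [one_smul] at E1_01 E1_11 E1_21 E1_30 E1_31 E1_32
    simp [sigma1, Matrix.mul_apply, Fin.sum_univ_four,
      Matrix.vecHead, Matrix.vecTail, Matrix.vecMul, dotProduct]
      at E1_01 E1_11 E1_21 E1_30 E1_31 E1_32
    have E2_00 := E2 0 0; have E2_01 := E2 0 1; have E2_10 := E2 1 0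
    have E2_11 := E2 1 1; have E2_12 := E2 1 2; have E2_13 := E2 1 3
    have E2_20 := E2 2 0; have E2_30 := E2 3 0; have E2_32 := E2 3 2
    simp [sigma2, Matrix.mul_apply, Matrix.smul_apply, Fin.sum_univ_four,
      Matrix.vecHead, Matrix.vecTail, Matrix.vecMul, dotProduct]
      at E2_00 E2_01 E2_10 E2_11 E2_12 E2_13 E2_20 E2_30 E2_32
    have E3 := Matrix.ext_iff.mpr h3
    have E3_01 := E3 0 1
    simp only [one_smul] at E3_01
    simp [sigma3, Matrix.mul_apply, Fin.sum_univ_four,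
      Matrix.vecHead, Matrix.vecTail, Matrix.vecMul, dotProduct] at E3_01
    rcases hc2 with rfl | rfl
    -- case c2 = 1 : the good case
    · have z01 : A 0 1 = 0 := by linear_combination (-(1:ℂ)/2) * E2_01
      have z03 : A 0 3 = 0 := by linear_combination E1_01
      have z02 : A 0 2 = 0 := by linear_combination - E1_01 + ((1:ℂ)/2) * E2_01 - E3_01
      have z30 : A 3 0 = 0 := by linear_combination ((1:ℂ)/2) * E2_30
      have z10 : A 1 0 = 0 := by linear_combination ((1:ℂ)/2) * E2_10 + ((1:ℂ)/4) * E2_30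
      have z20 : A 2 0 = 0 := by
        linear_combination - E1_30 - ((1:ℂ)/2) * E2_10 + ((3:ℂ)/4) * E2_30
      have z13 : A 1 3 = 0 := by linear_combination E1_11
      have z23 : A 2 3 = 0 := by linear_combination E1_21
      have z31 : A 3 1 = 0 := by linear_combination - E2_11
      have z32 : A 3 2 = 0 := by linear_combination ((1:ℂ)/2) * E2_32
      have z12 : A 1 2 = 0 := by linear_combination ((1:ℂ)/2) * E2_12 + ((1:ℂ)/4) * E2_32
      have z21 : A 2 1 = 0 := by linear_combination - E1_31 - (2:ℂ) * E2_11 - E2_13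
      have z22 : A 2 2 = A 1 1 := by
        linear_combination - E1_32 - ((1:ℂ)/2) * E2_12 - E2_13 + ((3:ℂ)/4) * E2_32
      have z33 : A 3 3 = A 1 1 := by linear_combination - E2_13
      have hAd : A = Matrix.diagonal ![A 0 0, A 1 1, A 1 1, A 1 1] := by
        ext i j
        fin_cases i <;> fin_cases j <;>
          simp [Matrix.diagonal_apply, Matrix.vecHead, Matrix.vecTail,
            z01, z02, z03, z10, z12, z13, z20, z21, z23, z30, z31, z32, z22, z33]
      have h00 : A 0 0 ≠ 0 := fun h =>
        hdet (by rw [hAd]; simp [Matrix.det_diagonal, Fin.prod_univ_four, h])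
      have h11 : A 1 1 ≠ 0 := fun h =>
        hdet (by rw [hAd]; simp [Matrix.det_diagonal, Fin.prod_univ_four, h])
      exact ⟨A 0 0, A 1 1, h00, h11, hAd⟩
    -- case c2 = -1 : impossible, since then the first column of A vanishes
    · exfalso
      have z0 : A 0 0 = 0 := by linear_combination ((1:ℂ)/2) * E2_00
      have z1 : A 1 0 = 0 := by
        linear_combination - E1_30 + (2:ℂ) * E2_10 - ((1:ℂ)/2) * E2_20
      have z2 : A 2 0 = 0 := by linear_combination ((1:ℂ)/2) * E2_20
      have z3 : A 3 0 = 0 := by linear_combination E2_10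
      exact hdet (Matrix.det_eq_zero_of_column_eq_zero 0
        (fun i => by fin_cases i <;> [exact z0; exact z1; exact z2; exact z3]))
  · rintro ⟨lam, mu, hl, hm, hd⟩
    refine ⟨⟨1, one_ne_zero, ?_⟩, ⟨1, one_ne_zero, ?_⟩, ⟨1, one_ne_zero, ?_⟩⟩ <;>
      rw [hd, one_smul] <;> ext i j <;> fin_cases i <;> fin_cases j <;>
        simp [sigma1, sigma2, sigma3, Matrix.mul_apply, Fin.sum_univ_four,
          Matrix.diagonal, Matrix.vecHead, Matrix.vecTail]
end

section
/- Let ζ ∈ ℂ be a primitive third root of unity and let τ₁, τ₂ ∈ GL₄(ℂ) be the matrices τ₁ = [[1,0,0,0],[0,1,0,0],[0,0,0,1],[0,0,1,0]] and τ₂ = [[1,0,0,0],[0,1,0,0],[0,0,0,ζ],[0,0,ζ²,0]]. Then for M ∈ GL₄(ℂ), the following are equivalent: (i) for each i ∈ {1,2} there exists a nonzero c ∈ ℂ with M·τᵢ = c·(τᵢ·M); (ii) there exist A ∈ GL₂(ℂ) and a nonzero c ∈ ℂ such that M is the block-diagonal matrix with blocks A and c·I₂. In other words, the centralizer in PGL₄(ℂ)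 of the subgroup generated by the classes of τ₁ and τ₂ consists exactly of the classes of the block-diagonal matrices [[A,0],[0,I₂]] with A ∈ GL₂(ℂ), a subgroup isomorphic to GL₂(ℂ). -/
/-- The matrix by which the transposition (12) of 𝔖₃ acts on ℙ³. -/
def tau1 : Matrix (Fin 4) (Fin 4) ℂ :=
  !![1, 0, 0, 0; 0, 1, 0, 0; 0, 0, 0, 1; 0, 0, 1, 0]

/-- The matrix by which the transposition (13) of 𝔖₃ acts on ℙ³, for a primitive third
root of unity `ζ`. -/
def tau2 (z : ℂ) : Matrix (Fin 4) (Fin 4) ℂ :=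
  !![1, 0, 0, 0; 0, 1, 0, 0; 0, 0, 0, z; 0, 0, z ^ 2, 0]

/-- Entry description of the block-diagonal matrices appearing in the theorem. -/
lemma blk_eq (A : Matrix (Fin 2) (Fin 2) ℂ) (c : ℂ) :
    Matrix.reindex finSumFinEquiv finSumFinEquiv
      (Matrix.fromBlocks A 0 0 (c • (1 : Matrix (Fin 2) (Fin 2) ℂ))) =
    !![A 0 0, A 0 1, 0, 0; A 1 0, A 1 1, 0, 0; 0, 0, c, 0; 0, 0, 0, c] := by
  ext i j
  fin_cases i <;> fin_cases j <;>
    norm_num [Matrix.fromBlocks, finSumFinEquiv, Matrix.one_apply, Fin.addCases,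
      Fin.castLT, Fin.subNat, Matrix.vecHead, Matrix.vecTail]

/-- Eta expansion for 4×4 matrices. -/
lemma eta_fin_four' (A : Matrix (Fin 4) (Fin 4) ℂ) :
    A = !![A 0 0, A 0 1, A 0 2, A 0 3; A 1 0, A 1 1, A 1 2, A 1 3;
           A 2 0, A 2 1, A 2 2, A 2 3; A 3 0, A 3 1, A 3 2, A 3 3] := by
  ext i j; fin_cases i <;> fin_cases j <;> rfl

/-- Block-diagonal matrices commute with `tau1`. -/
lemma comm1 (a b d e c : ℂ) :
    !![a,b,0,0; d,e,0,0; 0,0,c,0; 0,0,0,c] * tau1 =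
      tau1 * !![a,b,0,0; d,e,0,0; 0,0,c,0; 0,0,0,c] := by
  ext i j
  fin_cases i <;> fin_cases j <;>
    simp [tau1, Matrix.mul_apply, Fin.sum_univ_four, Matrix.vecHead, Matrix.vecTail,
      Matrix.vecMul, dotProduct]

/-- Block-diagonal matrices commute with `tau2 z`. -/
lemma comm2 (z a b d e c : ℂ) :
    !![a,b,0,0; d,e,0,0; 0,0,c,0; 0,0,0,c] * tau2 z =
      tau2 z * !![a,b,0,0; d,e,0,0; 0,0,c,0; 0,0,0,c] := by
  ext i j
  fin_cases i <;> fin_cases j <;>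
    simp [tau2, Matrix.mul_apply, Fin.sum_univ_four, Matrix.vecHead, Matrix.vecTail,
      Matrix.vecMul, dotProduct] <;> ring

/-- The basic scalar computation forcing the off-diagonal blocks to vanish. -/
lemma aux_zero (c1 c2 u v a b : ℂ) (hc1 : c1 ≠ 0) (huv : u * v = 1) (hne : u ≠ v)
    (h1 : b = c1 * a) (h2 : a = c1 * b) (h3 : u * b = c2 * a) (h4 : v * a = c2 * b) :
    a = 0 ∧ b = 0 := by
  rcases eq_or_ne a 0 with ha | ha
  · exact ⟨ha, by rw [h1, ha, mul_zero]⟩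
  · exfalso
    have hc12 : c1 * c1 = 1 := by
      have h : (c1 * c1 - 1) * a = 0 := by rw [h1] at h2; linear_combination -h2
      have := (mul_eq_zero.1 h).resolve_right ha
      linear_combination this
    have h5 : u * c1 = c2 := by
      have h : (u * c1 - c2) * a = 0 := by rw [h1] at h3; linear_combination h3
      have := (mul_eq_zero.1 h).resolve_right ha
      linear_combination this
    have h6 : v = c2 * c1 := by
      have h : (v - c2 * c1) * a = 0 := by rw [h1] at h4; linear_combination h4
      have := (mul_eq_zero.1 h).resolve_right ha
      linear_combination this
    exact hne (by linear_combination (-u) * hc12 + c1 * h5 + (-1) * h6)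

/-- An invertible matrix `M` commutes with each of `τ₁, τ₂` up to a nonzero scalar (i.e.
its class centralizes the subgroup of `PGL₄(ℂ)` generated by their classes) if and only
if `M` is block-diagonal with blocks `A ∈ GL₂(ℂ)` and `c·I₂` for some nonzero `c`. -/
theorem centralizer_of_S3_action (z : ℂ) (hz : IsPrimitiveRoot z 3) (M : GL (Fin 4) ℂ) :
    ((∃ c : ℂ, c ≠ 0 ∧ (M : Matrix (Fin 4) (Fin 4) ℂ) * tau1 =
        c • (tau1 * (M : Matrix (Fin 4) (Fin 4) ℂ))) ∧
     (∃ c : ℂ, c ≠ 0 ∧ (M : Matrix (Fin 4) (Fin 4) ℂ) * tau2 z =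
        c • (tau2 z * (M : Matrix (Fin 4) (Fin 4) ℂ)))) ↔
    ∃ (A : Matrix (Fin 2) (Fin 2) ℂ) (c : ℂ), IsUnit A ∧ c ≠ 0 ∧
      (M : Matrix (Fin 4) (Fin 4) ℂ) =
        Matrix.reindex finSumFinEquiv finSumFinEquiv
          (Matrix.fromBlocks A 0 0 (c • (1 : Matrix (Fin 2) (Fin 2) ℂ))) := by
  have hz3 : z ^ 3 = 1 := hz.pow_eq_one
  have hz0 : z ≠ 0 := fun h => by simp [h] at hz3
  have hz1 : z ≠ 1 := hz.ne_one (by norm_num)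
  have hzz : z ≠ z ^ 2 := by
    intro h
    rcases mul_eq_zero.1 (show z * (z - 1) = 0 by linear_combination -h) with h' | h'
    · exact hz0 h'
    · exact hz1 (by linear_combination h')
  set N := (M : Matrix (Fin 4) (Fin 4) ℂ) with hN
  have hdet : N.det ≠ 0 := by
    have : IsUnit N.det := (Matrix.isUnit_iff_isUnit_det N).1 M.isUnit
    exact this.ne_zero
  constructor
  · rintro ⟨⟨c1, hc1, h1⟩, ⟨c2, hc2, h2⟩⟩
    have E1 : ∀ i j : Fin 4, (N * tau1) i j = c1 * (tau1 * N) i j := fun i j => by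
      rw [h1]; simp
    have E2 : ∀ i j : Fin 4, (N * tau2 z) i j = c2 * (tau2 z * N) i j := fun i j => by
      rw [h2]; simp
    have q00 : N 0 0 = c1 * N 0 0 := by
      have := E1 0 0
      simpa [tau1, Matrix.mul_apply, Matrix.vecMul, dotProduct, Fin.sum_univ_four,
        Matrix.vecHead, Matrix.vecTail] using this
    have q01 : N 0 1 = c1 * N 0 1 := by
      have := E1 0 1
      simpa [tau1, Matrix.mul_apply, Matrix.vecMul, dotProduct, Fin.sum_univ_four,
        Matrix.vecHead, Matrix.vecTail] using this
    have q02 : N 0 3 = c1 * N 0 2 := by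
      have := E1 0 2
      simpa [tau1, Matrix.mul_apply, Matrix.vecMul, dotProduct, Fin.sum_univ_four,
        Matrix.vecHead, Matrix.vecTail] using this
    have q03 : N 0 2 = c1 * N 0 3 := by
      have := E1 0 3
      simpa [tau1, Matrix.mul_apply, Matrix.vecMul, dotProduct, Fin.sum_univ_four,
        Matrix.vecHead, Matrix.vecTail] using this
    have q12 : N 1 3 = c1 * N 1 2 := by
      have := E1 1 2
      simpa [tau1, Matrix.mul_apply, Matrix.vecMul, dotProduct, Fin.sum_univ_four,
        Matrix.vecHead, Matrix.vecTail] using this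
    have q13 : N 1 2 = c1 * N 1 3 := by
      have := E1 1 3
      simpa [tau1, Matrix.mul_apply, Matrix.vecMul, dotProduct, Fin.sum_univ_four,
        Matrix.vecHead, Matrix.vecTail] using this
    have q20 : N 2 0 = c1 * N 3 0 := by
      have := E1 2 0
      simpa [tau1, Matrix.mul_apply, Matrix.vecMul, dotProduct, Fin.sum_univ_four,
        Matrix.vecHead, Matrix.vecTail] using this
    have q30 : N 3 0 = c1 * N 2 0 := by
      have := E1 3 0
      simpa [tau1, Matrix.mul_apply, Matrix.vecMul, dotProduct, Fin.sum_univ_four,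
        Matrix.vecHead, Matrix.vecTail] using this
    have q21 : N 2 1 = c1 * N 3 1 := by
      have := E1 2 1
      simpa [tau1, Matrix.mul_apply, Matrix.vecMul, dotProduct, Fin.sum_univ_four,
        Matrix.vecHead, Matrix.vecTail] using this
    have q31 : N 3 1 = c1 * N 2 1 := by
      have := E1 3 1
      simpa [tau1, Matrix.mul_apply, Matrix.vecMul, dotProduct, Fin.sum_univ_four,
        Matrix.vecHead, Matrix.vecTail] using this
    have q22 : N 2 3 = c1 * N 3 2 := by
      have := E1 2 2
      simpa [tau1, Matrix.mul_apply, Matrix.vecMul, dotProduct, Fin.sum_univ_four,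
        Matrix.vecHead, Matrix.vecTail] using this
    have q33 : N 3 2 = c1 * N 2 3 := by
      have := E1 3 3
      simpa [tau1, Matrix.mul_apply, Matrix.vecMul, dotProduct, Fin.sum_univ_four,
        Matrix.vecHead, Matrix.vecTail] using this
    have q23 : N 2 2 = c1 * N 3 3 := by
      have := E1 2 3
      simpa [tau1, Matrix.mul_apply, Matrix.vecMul, dotProduct, Fin.sum_univ_four,
        Matrix.vecHead, Matrix.vecTail] using this
    have r02 : N 0 3 * z ^ 2 = c2 * N 0 2 := by
      have := E2 0 2
      simpa [tau2, Matrix.mul_apply, Matrix.vecMul, dotProduct, Fin.sum_univ_four,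
        Matrix.vecHead, Matrix.vecTail] using this
    have r03 : N 0 2 * z = c2 * N 0 3 := by
      have := E2 0 3
      simpa [tau2, Matrix.mul_apply, Matrix.vecMul, dotProduct, Fin.sum_univ_four,
        Matrix.vecHead, Matrix.vecTail] using this
    have r12 : N 1 3 * z ^ 2 = c2 * N 1 2 := by
      have := E2 1 2
      simpa [tau2, Matrix.mul_apply, Matrix.vecMul, dotProduct, Fin.sum_univ_four,
        Matrix.vecHead, Matrix.vecTail] using this
    have r13 : N 1 2 * z = c2 * N 1 3 := by
      have := E2 1 3
      simpa [tau2, Matrix.mul_apply, Matrix.vecMul, dotProduct, Fin.sum_univ_four,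
        Matrix.vecHead, Matrix.vecTail] using this
    have r20 : N 2 0 = c2 * (z * N 3 0) := by
      have := E2 2 0
      simpa [tau2, Matrix.mul_apply, Matrix.vecMul, dotProduct, Fin.sum_univ_four,
        Matrix.vecHead, Matrix.vecTail] using this
    have r30 : N 3 0 = c2 * (z ^ 2 * N 2 0) := by
      have := E2 3 0
      simpa [tau2, Matrix.mul_apply, Matrix.vecMul, dotProduct, Fin.sum_univ_four,
        Matrix.vecHead, Matrix.vecTail] using this
    have r21 : N 2 1 = c2 * (z * N 3 1) := by
      have := E2 2 1
      simpa [tau2, Matrix.mul_apply, Matrix.vecMul, dotProduct, Fin.sum_univ_four,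
        Matrix.vecHead, Matrix.vecTail] using this
    have r31 : N 3 1 = c2 * (z ^ 2 * N 2 1) := by
      have := E2 3 1
      simpa [tau2, Matrix.mul_apply, Matrix.vecMul, dotProduct, Fin.sum_univ_four,
        Matrix.vecHead, Matrix.vecTail] using this
    have r22 : N 2 3 * z ^ 2 = c2 * (z * N 3 2) := by
      have := E2 2 2
      simpa [tau2, Matrix.mul_apply, Matrix.vecMul, dotProduct, Fin.sum_univ_four,
        Matrix.vecHead, Matrix.vecTail] using this
    have r33 : N 3 2 * z = c2 * (z ^ 2 * N 2 3) := by
      have := E2 3 3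
      simpa [tau2, Matrix.mul_apply, Matrix.vecMul, dotProduct, Fin.sum_univ_four,
        Matrix.vecHead, Matrix.vecTail] using this
    have hzz' : z ^ 2 ≠ z := fun h => hzz h.symm
    have huv : z ^ 2 * z = 1 := by linear_combination hz3
    have huv' : z * z ^ 2 = 1 := by linear_combination hz3
    obtain ⟨h02, h03⟩ := aux_zero c1 c2 (z^2) z (N 0 2) (N 0 3) hc1 huv hzz' q02 q03
      (by linear_combination r02) (by linear_combination r03)
    obtain ⟨h12, h13⟩ := aux_zero c1 c2 (z^2) z (N 1 2) (N 1 3) hc1 huv hzz' q12 q13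
      (by linear_combination r12) (by linear_combination r13)
    obtain ⟨h30, h20⟩ := aux_zero c1 c2 (z^2) z (N 3 0) (N 2 0) hc1 huv hzz' q20 q30
      (by linear_combination z^2 * r20 + c2 * N 3 0 * hz3)
      (by linear_combination z * r30 + c2 * N 2 0 * hz3)
    obtain ⟨h31, h21⟩ := aux_zero c1 c2 (z^2) z (N 3 1) (N 2 1) hc1 huv hzz' q21 q31
      (by linear_combination z^2 * r21 + c2 * N 3 1 * hz3)
      (by linear_combination z * r31 + c2 * N 2 1 * hz3)
    obtain ⟨h32, h23⟩ := aux_zero c1 c2 z (z^2) (N 3 2) (N 2 3) hc1 huv' hzz q22 q33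
      (by linear_combination z^2 * r22 + (c2 * N 3 2 - z * N 2 3) * hz3)
      (by linear_combination z * r33 + c2 * N 2 3 * hz3)
    have hc1' : c1 = 1 := by
      by_contra h
      have hs : c1 - 1 ≠ 0 := sub_ne_zero.2 h
      have h00 : N 0 0 = 0 := by
        have : (c1 - 1) * N 0 0 = 0 := by linear_combination -q00
        exact (mul_eq_zero.1 this).resolve_left hs
      have h01 : N 0 1 = 0 := by
        have : (c1 - 1) * N 0 1 = 0 := by linear_combination -q01
        exact (mul_eq_zero.1 this).resolve_left hs
      exact hdet (Matrix.det_eq_zero_of_row_eq_zero 0 (fun j => by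
        fin_cases j <;> assumption))
    have h2233 : N 2 2 = N 3 3 := by rw [q23, hc1', one_mul]
    have hcne : N 2 2 ≠ 0 := by
      intro h
      exact hdet (Matrix.det_eq_zero_of_row_eq_zero 2 (fun j => by
        fin_cases j <;> assumption))
    have hMeq : N = Matrix.reindex finSumFinEquiv finSumFinEquiv
        (Matrix.fromBlocks !![N 0 0, N 0 1; N 1 0, N 1 1] 0 0
          (N 2 2 • (1 : Matrix (Fin 2) (Fin 2) ℂ))) := by
      rw [blk_eq]
      conv_lhs => rw [eta_fin_four' N]
      rw [h02, h03, h12, h13, h20, h21, h30, h31, h32, h23, h2233]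
      norm_num
    refine ⟨!![N 0 0, N 0 1; N 1 0, N 1 1], N 2 2, ?_, hcne, hMeq⟩
    rw [hMeq] at hdet
    rw [Matrix.det_reindex_self, Matrix.det_fromBlocks_zero₂₁, Matrix.det_smul,
      Matrix.det_one, mul_one] at hdet
    rcases mul_ne_zero_iff.1 hdet with ⟨hA, -⟩
    exact (Matrix.isUnit_iff_isUnit_det _).2 (isUnit_iff_ne_zero.2 hA)
  · rintro ⟨A, c, hA, hc, hM⟩
    rw [blk_eq] at hM
    exact ⟨⟨1, one_ne_zero, by rw [one_smul, hM, comm1]⟩,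
           ⟨1, one_ne_zero, by rw [one_smul, hM, comm2]⟩⟩
end
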